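/- Let ζ = exp(2πi/5) ∈ ℂ. The additive subgroup of ℂ generated by the five fifth roots of unity 1, ζ, ζ², ζ³, ζ⁴ (equivalently, the set of all integer linear combinations m₀ + m₁ζ + m₂ζ² + m₃ζ³ + m₄ζ⁴ with mᵢ ∈ ℤ) is dense in ℂ. -/

import Mathlib

open Complex

noncomputable def phi : ℝ := (Real.sqrt 5 - 1) / 2

lemma phi_irrational : Irrational phi := by
  have h5 : Irrational (Real.sqrt 5) := (by norm_num : Nat.Prime 5).irrational_sqrt
  have := (h5.sub_intCast 1).div_intCast (m := 2) (by norm_num)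
  simpa [phi] using this

/-- The set `{m + n·φ}` is dense in `ℝ`. -/
lemma dense_int_phi : Dense {a : ℝ | ∃ m n : ℤ, a = (m : ℝ) + (n : ℝ) * phi} := by
  set S : AddSubgroup ℝ :=
    { carrier := {a : ℝ | ∃ m n : ℤ, a = (m : ℝ) + (n : ℝ) * phi}
      add_mem' := by
        rintro x y ⟨m, n, rfl⟩ ⟨p, q, rfl⟩
        exact ⟨m + p, n + q, by push_cast; ring⟩
      zero_mem' := ⟨0, 0, by norm_num⟩
      neg_mem' := by
        rintro x ⟨m, n, rfl⟩
        exact ⟨-m, -n, by push_cast; ring⟩ } with hS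
  have h1 : (1 : ℝ) ∈ S := ⟨1, 0, by norm_num⟩
  have hphi : phi ∈ S := ⟨0, 1, by norm_num⟩
  rcases S.dense_or_cyclic with h | ⟨a, ha⟩
  · exact h
  · exfalso
    rw [ha, AddSubgroup.mem_closure_singleton] at h1 hphi
    obtain ⟨k, hk⟩ := h1
    obtain ⟨l, hl⟩ := hphi
    have hk0 : k ≠ 0 := by
      rintro rfl; simp at hk
    refine phi_irrational ⟨(l : ℚ) / k, ?_⟩
    have : (k : ℝ) * phi = (l : ℝ) := by
      calc (k : ℝ) * phi = (k * l : ℤ) • a := by rw [← hl]; push_cast [zsmul_eq_mul]; ring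
        _ = (l : ℝ) * ((k : ℤ) • a) := by push_cast [zsmul_eq_mul]; ring
        _ = (l : ℝ) := by rw [hk, mul_one]
    have hk0' : (k : ℝ) ≠ 0 := Int.cast_ne_zero.mpr hk0
    push_cast
    field_simp
    linarith [this]

/-- The set of all integer linear combinations m₀ + m₁ζ + m₂ζ² + m₃ζ³ + m₄ζ⁴
of the five fifth roots of unity, ζ = exp(2πi/5), is dense in ℂ. -/
theorem dense_intCombos_fifth_roots
    (ζ : ℂ) (hζ : ζ = Complex.exp (2 * Real.pi * Complex.I / 5)) :
    Dense {z : ℂ | ∃ m₀ m₁ m₂ m₃ m₄ : ℤ,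
      z = (m₀ : ℂ) + (m₁ : ℂ) * ζ + (m₂ : ℂ) * ζ ^ 2 + (m₃ : ℂ) * ζ ^ 3 + (m₄ : ℂ) * ζ ^ 4} := by
  set θ : ℝ := 2 * Real.pi / 5 with hθ
  have hζ' : ζ = Complex.exp ((θ : ℂ) * I) := by
    rw [hζ]; congr 1; push_cast [hθ]; ring
  have hζre : ζ = (Real.cos θ : ℂ) + (Real.sin θ : ℂ) * I := by
    rw [hζ', Complex.exp_mul_I]; norm_cast
  -- ζ^5 = 1
  have hζ5 : ζ ^ 5 = 1 := by
    have h1 : ζ ^ 5 = Complex.exp ((5 * θ : ℝ) * I) := by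
      rw [hζ', ← Complex.exp_nat_mul]; congr 1; push_cast; ring
    have h2 : ((5 * θ : ℝ) : ℂ) * I = 2 * (Real.pi : ℂ) * I := by push_cast [hθ]; ring
    rw [h1, h2, Complex.exp_two_pi_mul_I]
  -- |ζ| = 1
  have habs : ‖ζ‖ = 1 := by
    rw [hζ']; exact Complex.norm_exp_ofReal_mul_I θ
  -- cos θ = (√5 - 1)/4, so 2 cos θ = phi
  have hcos : Real.cos θ = (Real.sqrt 5 - 1) / 4 := by
    have h2 : θ = 2 * (Real.pi / 5) := by rw [hθ]; ring
    rw [h2, Real.cos_two_mul, Real.cos_pi_div_five]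
    have h5 : Real.sqrt 5 ^ 2 = 5 := Real.sq_sqrt (by norm_num)
    nlinarith [h5]
  have hphi : (phi : ℂ) = ζ + ζ ^ 4 := by
    have h4 : ζ ^ 4 = (Real.cos θ : ℂ) - (Real.sin θ : ℂ) * I := by
      have : ζ ^ 4 = Complex.exp ((4 * θ : ℝ) * I) := by
        rw [hζ', ← Complex.exp_nat_mul]; congr 1; push_cast; ring
      rw [this, Complex.exp_mul_I, ← Complex.ofReal_cos, ← Complex.ofReal_sin]
      have hc : Real.cos (4 * θ) = Real.cos θ := by
        have : (4 : ℝ) * θ = 2 * Real.pi - θ := by rw [hθ]; ring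
        rw [this, Real.cos_two_pi_sub]
      have hs : Real.sin (4 * θ) = -Real.sin θ := by
        have : (4 : ℝ) * θ = 2 * Real.pi - θ := by rw [hθ]; ring
        rw [this, Real.sin_two_pi_sub]
      rw [hc, hs]; push_cast; ring
    rw [h4, hζre]
    have : phi = 2 * Real.cos θ := by rw [hcos, phi]; ring
    rw [this]; push_cast; ring
  have hsin : Real.sin θ ≠ 0 := by
    apply ne_of_gt
    apply Real.sin_pos_of_pos_of_lt_pi
    · positivity
    · rw [hθ]
      nlinarith [Real.pi_pos]
  rw [Metric.dense_iff]
  intro z ε hε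
  -- write z = a + b ζ
  set b : ℝ := z.im / Real.sin θ with hb
  set a : ℝ := z.re - b * Real.cos θ with ha
  have hz : z = (a : ℂ) + (b : ℂ) * ζ := by
    have hre : ((a : ℂ) + (b : ℂ) * ζ).re = a + b * Real.cos θ := by rw [hζre]; simp [Complex.cos_ofReal_re, Complex.sin_ofReal_re]
    have him : ((a : ℂ) + (b : ℂ) * ζ).im = b * Real.sin θ := by rw [hζre]; simp [Complex.cos_ofReal_re, Complex.sin_ofReal_re]
    apply Complex.ext
    · rw [hre, ha]; ring
    · rw [him, hb, div_mul_cancel₀ _ hsin]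
  -- approximate a and b
  have hd := Metric.dense_iff.mp dense_int_phi
  obtain ⟨A, hA1, m, n, hA⟩ := hd a (ε / 2) (by linarith)
  obtain ⟨B, hB1, p, q, hB⟩ := hd b (ε / 2) (by linarith)
  rw [Metric.mem_ball, Real.dist_eq] at hA1 hB1
  refine ⟨(A : ℂ) + (B : ℂ) * ζ, Metric.mem_ball.mpr ?_, ?_⟩
  · rw [Complex.dist_eq, hz]
    have : (A : ℂ) + (B : ℂ) * ζ - ((a : ℂ) + (b : ℂ) * ζ)
        = ((A - a : ℝ) : ℂ) + ((B - b : ℝ) : ℂ) * ζ := by push_cast; ring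
    rw [this]
    calc ‖((A - a : ℝ) : ℂ) + ((B - b : ℝ) : ℂ) * ζ‖
        ≤ ‖((A - a : ℝ) : ℂ)‖ + ‖((B - b : ℝ) : ℂ) * ζ‖ :=
          norm_add_le _ _
      _ = |A - a| + |B - b| * 1 := by rw [norm_mul, habs, Complex.norm_real, Complex.norm_real, Real.norm_eq_abs, Real.norm_eq_abs]
      _ < ε / 2 + ε / 2 * 1 := by
          apply add_lt_add hA1
          rw [mul_one, mul_one]; exact hB1
      _ = ε := by ring
  · refine ⟨m + q, n + p, q, 0, n, ?_⟩
    rw [hA, hB]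
    push_cast
    rw [hphi]
    linear_combination q * hζ5
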